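/- Change of basis between lines (Lemma 2.2(b)): if ℓ = {i, j, i*j} and ℓ' = {i, k, i*k} are two distinct Fano lines through i, then the column vector (E_i^{ℓ, j*k}, F_i^ℓ) equals θPθ·(E_i^{ℓ',j}, F_i^{ℓ'}) where θPθ = (1/2)[[−1,−1],[3,−1]], i.e. E_i^{ℓ,j*k} = −(1/2)(E_i^{ℓ',j} + F_i^{ℓ'}) and F_i^ℓ = (1/2)(3E_i^{ℓ',j} − F_i^{ℓ'}). -/

import Mathlib

noncomputable section

/-- Offset function for the octonion multiplication table: for distinct indices
`i, j` (in `ZMod 7`) with `d = j - i`, `eᵢ eⱼ = ± e_{i + octOff d}`.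
It encodes the rules `eᵢe_{i+1} = e_{i+3}`, `e_{i+1}e_{i+3} = eᵢ`,
`e_{i+3}eᵢ = e_{i+1}` (indices modulo 7). -/
def octOff : ZMod 7 → ZMod 7 := fun d =>
  if d = 1 then 3 else if d = 2 then 6 else if d = 3 then 1
  else if d = 4 then 5 else if d = 5 then 4 else if d = 6 then 2 else 0

/-- Sign in `eᵢ eⱼ = octSgn (j - i) • e_{i*j}` for distinct `i, j`. -/
def octSgn : ZMod 7 → ℝ := fun d => if d = 1 ∨ d = 2 ∨ d = 4 then 1 else -1

/-- The real octonion division algebra: a scalar part and seven imaginary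
coordinates (indexed by `ZMod 7`; index `i` stands for the unit `eᵢ`,
with `e₀ = e₇`). -/
def Oct : Type := ℝ × (ZMod 7 → ℝ)

instance : AddCommGroup Oct := inferInstanceAs (AddCommGroup (ℝ × (ZMod 7 → ℝ)))
instance : Module ℝ Oct := inferInstanceAs (Module ℝ (ℝ × (ZMod 7 → ℝ)))

/-- View an octonion as a pair. -/
def oc (x : Oct) : ℝ × (ZMod 7 → ℝ) := x
/-- Build an octonion from a pair. -/
def om (p : ℝ × (ZMod 7 → ℝ)) : Oct := p

/-- The octonion multiplication: `e₀ = 1` is the unit, `eᵢ² = -1` and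
`eᵢe_{i+1} = e_{i+3} = -e_{i+1}eᵢ` for the imaginary units (indices mod 7). -/
instance : Mul Oct :=
  ⟨fun x y => om
    ((oc x).1 * (oc y).1 - ∑ i : ZMod 7, (oc x).2 i * (oc y).2 i,
     fun k => (oc x).1 * (oc y).2 k + (oc y).1 * (oc x).2 k +
       ∑ i : ZMod 7, ∑ j : ZMod 7,
         (if i ≠ j ∧ k = i + octOff (j - i) then octSgn (j - i) else 0)
           * (oc x).2 i * (oc y).2 j)⟩

instance : One Oct := ⟨om (1, 0)⟩

/-- The imaginary basis units `eᵢ`, `i ∈ ZMod 7` (`e₀ = e₇`). -/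
def e (i : ZMod 7) : Oct := om (0, Pi.single i 1)

/-- For distinct `i, j`, `idx i j = i*j` is the index with `gᵢ + gⱼ = g_{i*j}`,
i.e. `eᵢeⱼ = ± e_{idx i j}`. -/
def idx (i j : ZMod 7) : ZMod 7 := i + octOff (j - i)

/-- A linear endomorphism of the octonions is a derivation. -/
def IsOctDer (d : Oct →ₗ[ℝ] Oct) : Prop := ∀ x y : Oct, d (x * y) = d x * y + x * d y

/-- The quaternion subalgebra `Q_ℓ = ⟨1, eᵢ, eⱼ, e_{i*j}⟩` attached to the
Fano line `ℓ = {i, j, i*j}`. -/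
def Qline (i j : ZMod 7) : Submodule ℝ Oct :=
  Submodule.span ℝ ({1, e i, e j, e (idx i j)} : Set Oct)

/-- `isE i k Q E` says that `E = E_i^{ℓ,k}` : `E(q) = 0` and
`E(q·e_k) = (1/2)(eᵢq)e_k` for all `q ∈ Q = Q_ℓ`. -/
def isE (i k : ZMod 7) (Q : Submodule ℝ Oct) (E : Oct →ₗ[ℝ] Oct) : Prop :=
  ∀ q ∈ Q, E q = 0 ∧ E (q * e k) = (1/2 : ℝ) • ((e i * q) * e k)

/-- `isF i k Q F` says that `F = F_i^{ℓ,k}` : `F(q) = (1/2)[eᵢ, q]` and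
`F(q·e_k) = −(1/2)(q·eᵢ)e_k` for all `q ∈ Q = Q_ℓ`. -/
def isF (i k : ZMod 7) (Q : Submodule ℝ Oct) (F : Oct →ₗ[ℝ] Oct) : Prop :=
  ∀ q ∈ Q, F q = (1/2 : ℝ) • (e i * q - q * e i) ∧
    F (q * e k) = -((1/2 : ℝ) • ((q * e i) * e k))

end

/-!
Call `a, b, c` a basic triple when `c` lies off the Fano line through `a ≠ b`. Up to sign, the
standard basis of `𝕆` is then the union of the four pairs `{x, eₐx}`, `x = 1, e_b, e_c, e_b e_c`.
By the alternative law `eₐ(eₐx) = -x` and the anti-associativity `(eₐe_b)e_c = -eₐ(e_b e_c)`, the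
defining relations force `E_a^{ℓ,c}` and `F_a^{ℓ,c}` (`ℓ` the line through `a, b`) to act on each
pair as a multiple of left multiplication by `eₐ`, with weights `(0, 0, 1/2, -1/2)` and
`(0, 1, -1/2, -1/2)`. The frames `(i, j, j*k)` and `(i, k, j)` give the same four pairs, the last
three permuted, so both identities reduce to linear relations between weight vectors.
-/

/-- An integer copy of `octSgn`, so that sign identities can be checked by `decide`. -/
def octSgnInt (d : ZMod 7) : ℤ := if d = 1 ∨ d = 2 ∨ d = 4 then 1 else -1

lemma octSgn_eq_cast (d : ZMod 7) : octSgn d = octSgnInt d := by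
  unfold octSgn octSgnInt; split_ifs <;> simp

lemma octSgn_mul_self (d : ZMod 7) : octSgn d * octSgn d = 1 := by
  unfold octSgn; split_ifs <;> norm_num

lemma octSgn_sub_comm {a b : ZMod 7} (h : a ≠ b) : octSgn (a - b) = -octSgn (b - a) := by
  have key : ∀ a b : ZMod 7, a ≠ b → octSgnInt (a - b) = -octSgnInt (b - a) := by decide
  rw [octSgn_eq_cast, octSgn_eq_cast, key a b h, Int.cast_neg]

lemma idx_comm (a b : ZMod 7) : idx b a = idx a b := by
  revert a b; unfold idx; decide

lemma idx_ne_left {a b : ZMod 7} (h : a ≠ b) : idx a b ≠ a := by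
  revert a b; unfold idx; decide

lemma idx_idx {a b : ZMod 7} (h : a ≠ b) : idx a (idx a b) = b := by
  revert a b; unfold idx; decide

lemma octSgn_mul_octSgn_idx {a b : ZMod 7} (h : a ≠ b) :
    octSgn (b - a) * octSgn (idx a b - a) = -1 := by
  have key : ∀ a b : ZMod 7, a ≠ b → octSgnInt (b - a) * octSgnInt (idx a b - a) = -1 := by
    unfold idx; decide
  rw [octSgn_eq_cast, octSgn_eq_cast, ← Int.cast_mul, key a b h, Int.cast_neg, Int.cast_one]

def IsBasicTriple (a b c : ZMod 7) : Prop := a ≠ b ∧ c ≠ a ∧ c ≠ b ∧ c ≠ idx a b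

namespace IsBasicTriple

variable {a b c : ZMod 7}

lemma swap (h : IsBasicTriple a b c) : IsBasicTriple a c b := by
  revert a b c; unfold IsBasicTriple idx; decide

lemma idx_right (h : IsBasicTriple a b c) : IsBasicTriple a b (idx b c) := by
  revert a b c; unfold IsBasicTriple idx; decide

lemma idx_ne (h : IsBasicTriple a b c) : idx b c ≠ a := by
  revert a b c; unfold IsBasicTriple idx; decide

lemma idx_assoc (h : IsBasicTriple a b c) : idx (idx a b) c = idx a (idx b c) := by
  revert a b c; unfold IsBasicTriple idx; decide

lemma octSgn_assoc (h : IsBasicTriple a b c) :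
    octSgn (b - a) * octSgn (c - idx a b) = -(octSgn (c - b) * octSgn (idx b c - a)) := by
  have key : ∀ a b c : ZMod 7, IsBasicTriple a b c →
      octSgnInt (b - a) * octSgnInt (c - idx a b) =
        -(octSgnInt (c - b) * octSgnInt (idx b c - a)) := by
    unfold IsBasicTriple idx; decide
  simp only [octSgn_eq_cast]
  exact_mod_cast key a b c h

lemma cover (h : IsBasicTriple a b c) (t : ZMod 7) :
    t = a ∨ t = b ∨ t = idx a b ∨ t = c ∨ t = idx a c ∨ t = idx b c ∨ t = idx a (idx b c) := by
  revert a b c t; unfold IsBasicTriple idx; decide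

end IsBasicTriple

namespace Oct

@[ext]
lemma ext {x y : Oct} (h₁ : (oc x).1 = (oc y).1) (h₂ : ∀ t, (oc x).2 t = (oc y).2 t) : x = y :=
  Prod.ext h₁ (funext h₂)

@[simp] lemma oc_smul (r : ℝ) (x : Oct) : oc (r • x) = r • oc x := rfl
@[simp] lemma oc_add (x y : Oct) : oc (x + y) = oc x + oc y := rfl
@[simp] lemma oc_sum (f : ZMod 7 → Oct) : oc (∑ t, f t) = ∑ t, oc (f t) := rfl
@[simp] lemma oc_neg (x : Oct) : oc (-x) = -oc x := rfl
@[simp] lemma oc_one : oc 1 = (1, 0) := rfl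
@[simp] lemma oc_e (t : ZMod 7) : oc (e t) = (0, Pi.single t 1) := rfl

lemma fst_mul (x y : Oct) :
    (oc (x * y)).1 = (oc x).1 * (oc y).1 - ∑ i : ZMod 7, (oc x).2 i * (oc y).2 i := rfl

lemma snd_mul (x y : Oct) (k : ZMod 7) :
    (oc (x * y)).2 k = (oc x).1 * (oc y).2 k + (oc y).1 * (oc x).2 k +
      ∑ i : ZMod 7, ∑ j : ZMod 7,
        (if i ≠ j ∧ k = i + octOff (j - i) then octSgn (j - i) else 0)
          * (oc x).2 i * (oc y).2 j := rfl

lemma smul_mul (r : ℝ) (x y : Oct) : (r • x) * y = r • (x * y) := by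
  ext
  · simp only [fst_mul, oc_smul, Prod.smul_fst, Prod.smul_snd, Pi.smul_apply, smul_eq_mul,
      mul_sub, Finset.mul_sum]
    ring_nf
  · simp only [snd_mul, oc_smul, Prod.smul_fst, Prod.smul_snd, Pi.smul_apply, smul_eq_mul,
      mul_add, Finset.mul_sum]
    ring_nf

lemma mul_smul (r : ℝ) (x y : Oct) : x * (r • y) = r • (x * y) := by
  ext
  · simp only [fst_mul, oc_smul, Prod.smul_fst, Prod.smul_snd, Pi.smul_apply, smul_eq_mul,
      mul_sub, Finset.mul_sum]
    ring_nf
  · simp only [snd_mul, oc_smul, Prod.smul_fst, Prod.smul_snd, Pi.smul_apply, smul_eq_mul,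
      mul_add, Finset.mul_sum]
    ring_nf

lemma neg_mul (x y : Oct) : -x * y = -(x * y) := by
  rw [← neg_one_smul ℝ x, smul_mul, neg_one_smul]

lemma mul_neg (x y : Oct) : x * -y = -(x * y) := by
  rw [← neg_one_smul ℝ y, mul_smul, neg_one_smul]

lemma one_mul (x : Oct) : 1 * x = x := by
  ext <;> simp [fst_mul, snd_mul]

lemma mul_one (x : Oct) : x * 1 = x := by
  ext <;> simp [fst_mul, snd_mul]

lemma e_mul_self (a : ZMod 7) : e a * e a = -1 := by
  ext <;> simp [fst_mul, snd_mul, Pi.single_apply]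

lemma e_mul_e_of_ne {a b : ZMod 7} (h : a ≠ b) :
    e a * e b = octSgn (b - a) • e (idx a b) := by
  ext t
  · simp [fst_mul, Pi.single_apply, h.symm]
  · simp [snd_mul, Pi.single_apply, h, idx, eq_comm]

lemma e_mul_e_mul (a b : ZMod 7) : e a * (e a * e b) = -e b := by
  rcases eq_or_ne a b with rfl | h
  · rw [e_mul_self, mul_neg, mul_one]
  · rw [e_mul_e_of_ne h, mul_smul, e_mul_e_of_ne (idx_ne_left h).symm, idx_idx h, smul_smul,
      octSgn_mul_octSgn_idx h, neg_one_smul]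

lemma e_mul_e_anticomm {a b : ZMod 7} (h : a ≠ b) : e b * e a = -(e a * e b) := by
  rw [e_mul_e_of_ne h, e_mul_e_of_ne h.symm, idx_comm, octSgn_sub_comm h.symm, neg_smul, neg_neg]

lemma e_mul_e_mul_e_left {a b : ZMod 7} (h : a ≠ b) : e a * e b * e a = e b := by
  rw [e_mul_e_of_ne h, smul_mul, e_mul_e_anticomm (idx_ne_left h).symm, smul_neg, ← mul_smul,
    ← e_mul_e_of_ne h, e_mul_e_mul, neg_neg]

lemma e_idx {a b : ZMod 7} (h : a ≠ b) : e (idx a b) = octSgn (b - a) • (e a * e b) := by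
  rw [e_mul_e_of_ne h, smul_smul, octSgn_mul_self, one_smul]

lemma e_mul_e_mul_e_mul_e (a : ZMod 7) {b c : ZMod 7} (h : b ≠ c) :
    e a * (e a * (e b * e c)) = -(e b * e c) := by
  rw [e_mul_e_of_ne h, mul_smul, mul_smul, e_mul_e_mul, smul_neg]

lemma _root_.IsBasicTriple.e_mul_e_mul_e {a b c : ZMod 7} (h : IsBasicTriple a b c) :
    e a * e b * e c = -(e a * (e b * e c)) := by
  rw [e_mul_e_of_ne h.1, smul_mul, e_mul_e_of_ne h.2.2.2.symm, e_mul_e_of_ne h.2.2.1.symm, mul_smul,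
    e_mul_e_of_ne h.idx_ne.symm, smul_smul, smul_smul, h.idx_assoc, ← neg_smul, h.octSgn_assoc]

open Submodule in
lemma span_one_e : span ℝ (insert (1 : Oct) (Set.range e)) = ⊤ := by
  refine eq_top_iff.2 fun x _ => ?_
  have hx : x = (oc x).1 • 1 + ∑ t, (oc x).2 t • e t := by
    ext <;> simp [Prod.fst_sum, Prod.snd_sum, Pi.single_apply]
  rw [hx]
  exact add_mem (smul_mem _ _ (subset_span (Set.mem_insert _ _)))
    (sum_mem fun t _ => smul_mem _ _ (subset_span (Set.mem_insert_of_mem _ ⟨t, rfl⟩)))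

end Oct

section Qline

variable {a b : ZMod 7}

lemma one_mem_Qline : (1 : Oct) ∈ Qline a b := Submodule.subset_span (by simp)

lemma e_left_mem_Qline : e a ∈ Qline a b := Submodule.subset_span (by simp)

lemma e_right_mem_Qline : e b ∈ Qline a b := Submodule.subset_span (by simp)

lemma e_mul_e_mem_Qline (h : a ≠ b) : e a * e b ∈ Qline a b := by
  rw [Oct.e_mul_e_of_ne h]
  exact Submodule.smul_mem _ _ (Submodule.subset_span (by simp))

end Qline

def cosetRep (b c : ZMod 7) : Fin 4 → Oct := ![1, e b, e c, e b * e c]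

open Submodule in
lemma IsBasicTriple.span_cosetRep {a b c : ZMod 7} (h : IsBasicTriple a b c) :
    span ℝ (Set.range (cosetRep b c) ∪ Set.range fun n => e a * cosetRep b c n) = ⊤ := by
  set V := span ℝ (Set.range (cosetRep b c) ∪ Set.range fun n => e a * cosetRep b c n)
  have rep (n : Fin 4) : cosetRep b c n ∈ V := subset_span (Or.inl ⟨n, rfl⟩)
  have mul_rep (n : Fin 4) : e a * cosetRep b c n ∈ V := subset_span (Or.inr ⟨n, rfl⟩)
  refine eq_top_iff.2 (Oct.span_one_e ▸ span_le.2 ?_)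
  rintro _ (rfl | ⟨t, rfl⟩)
  · exact rep 0
  rcases h.cover t with rfl | rfl | rfl | rfl | rfl | rfl | rfl
  · simpa [cosetRep, Oct.mul_one] using mul_rep 0
  · exact rep 1
  · rw [Oct.e_idx h.1]
    exact smul_mem _ _ (mul_rep 1)
  · exact rep 2
  · rw [Oct.e_idx h.2.1.symm]
    exact smul_mem _ _ (mul_rep 2)
  · rw [Oct.e_idx h.2.2.1.symm]
    exact smul_mem _ _ (rep 3)
  · rw [Oct.e_idx h.idx_ne.symm, Oct.e_idx h.2.2.1.symm, Oct.mul_smul]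
    exact smul_mem _ _ (smul_mem _ _ (mul_rep 3))

def ScalesOn (a : ZMod 7) (E : Oct →ₗ[ℝ] Oct) (r : ℝ) (x : Oct) : Prop :=
  E x = r • (e a * x) ∧ E (e a * x) = r • (e a * (e a * x))

namespace ScalesOn

variable {a : ZMod 7} {E F : Oct →ₗ[ℝ] Oct} {r r' : ℝ} {x : Oct}

lemma add (hE : ScalesOn a E r x) (hF : ScalesOn a F r' x) : ScalesOn a (E + F) (r + r') x :=
  ⟨by simp [hE.1, hF.1, add_smul], by simp [hE.2, hF.2, add_smul]⟩

lemma sub (hE : ScalesOn a E r x) (hF : ScalesOn a F r' x) : ScalesOn a (E - F) (r - r') x :=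
  ⟨by simp [hE.1, hF.1, sub_smul], by simp [hE.2, hF.2, sub_smul]⟩

lemma smul (hE : ScalesOn a E r x) (s : ℝ) : ScalesOn a (s • E) (s * r) x :=
  ⟨by simp [hE.1, mul_smul], by simp [hE.2, mul_smul]⟩

lemma neg (hE : ScalesOn a E r x) : ScalesOn a (-E) (-r) x :=
  ⟨by simp [hE.1], by simp [hE.2]⟩

lemma smul_right (hE : ScalesOn a E r x) (s : ℝ) : ScalesOn a E r (s • x) :=
  ⟨by rw [map_smul, hE.1, Oct.mul_smul, smul_comm],
   by rw [Oct.mul_smul, map_smul, hE.2, Oct.mul_smul, smul_comm]⟩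

end ScalesOn

def HasWeights (a b c : ZMod 7) (w : Fin 4 → ℝ) (E : Oct →ₗ[ℝ] Oct) : Prop :=
  ∀ n, ScalesOn a E (w n) (cosetRep b c n)

lemma hasWeights_iff {a b c : ZMod 7} {w₀ w₁ w₂ w₃ : ℝ} {E : Oct →ₗ[ℝ] Oct} :
    HasWeights a b c ![w₀, w₁, w₂, w₃] E ↔ ScalesOn a E w₀ 1 ∧ ScalesOn a E w₁ (e b) ∧
      ScalesOn a E w₂ (e c) ∧ ScalesOn a E w₃ (e b * e c) := by
  simp [HasWeights, Fin.forall_fin_succ, cosetRep]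

namespace HasWeights

variable {a b c : ZMod 7} {w w' : Fin 4 → ℝ} {E F : Oct →ₗ[ℝ] Oct}

lemma add (hE : HasWeights a b c w E) (hF : HasWeights a b c w' F) :
    HasWeights a b c (w + w') (E + F) := fun n => (hE n).add (hF n)

lemma sub (hE : HasWeights a b c w E) (hF : HasWeights a b c w' F) :
    HasWeights a b c (w - w') (E - F) := fun n => (hE n).sub (hF n)

lemma smul (hE : HasWeights a b c w E) (s : ℝ) : HasWeights a b c (s • w) (s • E) :=
  fun n => (hE n).smul s

lemma neg (hE : HasWeights a b c w E) : HasWeights a b c (-w) (-E) := fun n => (hE n).neg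

lemma rotate {w₀ w₁ w₂ w₃ : ℝ} (hbc : b ≠ c) (hE : HasWeights a b (idx b c) ![w₀, w₁, w₂, w₃] E) :
    HasWeights a c b ![w₀, w₃, w₁, w₂] E := by
  obtain ⟨h₀, h₁, h₂, h₃⟩ := hasWeights_iff.1 hE
  have hc : e c = -octSgn (c - b) • (e b * e (idx b c)) := by
    rw [neg_smul, ← Oct.mul_smul, ← Oct.e_mul_e_of_ne hbc, Oct.e_mul_e_mul, neg_neg]
  refine hasWeights_iff.2 ⟨h₀, hc ▸ h₃.smul_right _, h₁, ?_⟩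
  rw [Oct.e_mul_e_of_ne hbc.symm, idx_comm]
  exact h₂.smul_right _

lemma eq (h : IsBasicTriple a b c) (hE : HasWeights a b c w E) (hF : HasWeights a b c w' F)
    (hw : w = w') : E = F := by
  subst hw
  refine LinearMap.ext_on h.span_cosetRep ?_
  rintro _ (⟨n, rfl⟩ | ⟨n, rfl⟩)
  · exact (hE n).1.trans (hF n).1.symm
  · exact (hE n).2.trans (hF n).2.symm

end HasWeights

section Derivations

variable {a b c : ZMod 7}

lemma isE.hasWeights {E : Oct →ₗ[ℝ] Oct} (h : IsBasicTriple a b c) (hE : isE a c (Qline a b) E) :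
    HasWeights a b c ![0, 0, 1/2, -1/2] E := by
  have h_one := hE 1 one_mem_Qline
  have h_a := hE (e a) e_left_mem_Qline
  have h_b := hE (e b) e_right_mem_Qline
  have h_ab := hE _ (e_mul_e_mem_Qline h.1)
  have h_assoc : e a * (e b * e c) = -(e a * e b * e c) :=
    neg_eq_iff_eq_neg.1 h.e_mul_e_mul_e.symm
  refine hasWeights_iff.2 ⟨⟨?_, ?_⟩, ⟨?_, ?_⟩, ⟨?_, ?_⟩, ⟨?_, ?_⟩⟩
  · simp [h_one.1]
  · simp [Oct.mul_one, h_a.1]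
  · simp [h_b.1]
  · simp [h_ab.1]
  · simpa [Oct.one_mul, Oct.mul_one] using h_one.2
  · rw [h_a.2, Oct.e_mul_self, Oct.neg_mul, Oct.one_mul, Oct.e_mul_e_mul]
  · rw [h_b.2, h.e_mul_e_mul_e]
    module
  · rw [Oct.e_mul_e_mul_e_mul_e a h.2.2.1.symm, h_assoc, map_neg, h_ab.2,
      Oct.e_mul_e_mul, Oct.neg_mul]
    module

lemma isF.hasWeights {F : Oct →ₗ[ℝ] Oct} (h : IsBasicTriple a b c) (hF : isF a c (Qline a b) F) :
    HasWeights a b c ![0, 1, -1/2, -1/2] F := by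
  have h_one := hF 1 one_mem_Qline
  have h_a := hF (e a) e_left_mem_Qline
  have h_b := hF (e b) e_right_mem_Qline
  have h_ab := hF _ (e_mul_e_mem_Qline h.1)
  have h_assoc : e a * (e b * e c) = -(e a * e b * e c) :=
    neg_eq_iff_eq_neg.1 h.e_mul_e_mul_e.symm
  refine hasWeights_iff.2 ⟨⟨?_, ?_⟩, ⟨?_, ?_⟩, ⟨?_, ?_⟩, ⟨?_, ?_⟩⟩
  · simp [h_one.1, Oct.one_mul, Oct.mul_one]
  · simp [Oct.mul_one, h_a.1]
  · rw [h_b.1, Oct.e_mul_e_anticomm h.1]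
    module
  · rw [h_ab.1, Oct.e_mul_e_mul_e_left h.1, Oct.e_mul_e_mul]
    module
  · rw [← Oct.one_mul (e c), h_one.2, Oct.one_mul, Oct.one_mul]
    module
  · rw [h_a.2, Oct.e_mul_self, Oct.neg_mul, Oct.one_mul, Oct.e_mul_e_mul]
    module
  · rw [h_b.2, Oct.e_mul_e_anticomm h.1, Oct.neg_mul, h.e_mul_e_mul_e]
    module
  · rw [Oct.e_mul_e_mul_e_mul_e a h.2.2.1.symm, h_assoc, map_neg, h_ab.2,
      Oct.e_mul_e_mul_e_left h.1]
    module

end Derivations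

/-- Lemma 2.2(b): if `ℓ = {i, j, i*j}` and `ℓ' = {i, k, i*k}` are
distinct Fano lines through `i`, then
`E_i^{ℓ,j*k} = −(1/2)(E_i^{ℓ',j} + F_i^{ℓ'})` and
`F_i^ℓ = (1/2)(3E_i^{ℓ',j} − F_i^{ℓ'})`, i.e.
`(E_i^{ℓ,j*k}, F_i^ℓ) = θPθ·(E_i^{ℓ',j}, F_i^{ℓ'})` with
`θPθ = (1/2)[[−1,−1],[3,−1]]`. -/
theorem stmt11 : ∀ i j k : ZMod 7, i ≠ j →
    k ∉ ({i, j, idx i j} : Set (ZMod 7)) →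
    ∀ E₁ F₁ E₂ F₂ : Oct →ₗ[ℝ] Oct,
      isE i (idx j k) (Qline i j) E₁ → isF i (idx j k) (Qline i j) F₁ →
      isE i j (Qline i k) E₂ → isF i j (Qline i k) F₂ →
      E₁ = -((1/2 : ℝ) • (E₂ + F₂)) ∧ F₁ = (1/2 : ℝ) • ((3 : ℝ) • E₂ - F₂) := by
  intro i j k hij hk E₁ F₁ E₂ F₂ hE₁ hF₁ hE₂ hF₂
  have h : IsBasicTriple i j k := ⟨hij, by simp_all⟩
  have hE₁' := (hE₁.hasWeights h.idx_right).rotate h.2.2.1.symm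
  have hF₁' := (hF₁.hasWeights h.idx_right).rotate h.2.2.1.symm
  have hE₂' := hE₂.hasWeights h.swap
  have hF₂' := hF₂.hasWeights h.swap
  constructor
  · exact hE₁'.eq h.swap ((hE₂'.add hF₂').smul _).neg (by ext n; fin_cases n <;> norm_num)
  · exact hF₁'.eq h.swap (((hE₂'.smul 3).sub hF₂').smul _) (by ext n; fin_cases n <;> norm_num)
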